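/- Let κ be an infinite regular cardinal and I a proper ideal on κ containing every bounded subset of κ. Suppose D ⊆ I⁺ is dense in I⁺ modulo bounded sets, i.e., for every Y ∈ I⁺ there is B ∈ D with B ∖ Y bounded. Then for every A ∈ I⁺, the set {B ∈ D : B ∖ A is bounded} has cardinality at least κ⁺. In particular, D itself has cardinality at least κ⁺. -/

import Mathlib

/-!
Suppose fewer than `κ⁺` members of `D` are almost contained in `A`, and enumerate them as
`(B_c)_{c<κ}`. Each `B_c ∩ A` is `I`-positive, hence unbounded, and a transfinite recursion of
length `κ` (possible by regularity) builds a set `X` made of blocks separated by gaps, such that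
every `B_c ∩ A` meets both `X` and its complement unboundedly. One of `A ∩ X`, `A \ X` is
`I`-positive, so by density some `B ∈ D` is almost contained in it; then `B` is one of the `B_c`,
but `B_c ∩ A` is not almost contained in `X` nor in its complement.
-/

open Cardinal

/-- A subset of the ordinals below `κ` (realized as the type `κ.ord.ToType`)
is bounded if it is contained in a proper initial segment. -/
def Bdd {C : Type*} [Preorder C] (X : Set C) : Prop :=
  ∃ b : C, X ⊆ Set.Iio b

open Set

theorem bdd_iff_not_isCofinal {C : Type*} [LinearOrder C] {X : Set C} : Bdd X ↔ ¬IsCofinal X :=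
  not_isCofinal_iff.symm

theorem Bdd.mono {C : Type*} [Preorder C] {X Y : Set C} (h : X ⊆ Y) : Bdd Y → Bdd X :=
  fun ⟨b, hb⟩ => ⟨b, h.trans hb⟩

theorem IsCofinal.exists_gt {C : Type*} [Preorder C] [NoMaxOrder C] {s : Set C}
    (hs : IsCofinal s) (b : C) : ∃ x ∈ s, b < x := by
  obtain ⟨b', hb'⟩ := NoMaxOrder.exists_gt b
  obtain ⟨x, hx, hle⟩ := hs b'
  exact ⟨x, hx, hb'.trans_le hle⟩

theorem notMem_iUnion_Ioc_of_mem_gap {C ι : Type*} [LinearOrder C] [LinearOrder ι]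
    {ν : C → C} {σ : ι → C} (hν : ∀ b, b < ν b) (hσ : ∀ β γ, β < γ → ν (ν (σ β)) < σ γ)
    {γ : ι} {q : C} (hq₁ : ν (σ γ) < q) (hq₂ : q ≤ ν (ν (σ γ))) :
    q ∉ ⋃ γ', Ioc (σ γ') (ν (σ γ')) := by
  rw [mem_iUnion]
  rintro ⟨γ', h₁, h₂⟩
  rcases lt_trichotomy γ' γ with h | rfl | h
  · exact (h₂.trans_lt ((hν _).trans (hσ _ _ h)) |>.trans ((hν _).trans hq₁)).false
  · exact (hq₁.trans_le h₂).false
  · exact (h₁.trans_le hq₂ |>.trans (hσ _ _ h)).false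

namespace Cardinal.IsRegular

variable {κ : Cardinal.{u}}

theorem exists_forall_lt_of_mk_lt (hκ : κ.IsRegular) {s : Set κ.ord.ToType} (hs : #s < κ) :
    ∃ b, ∀ x ∈ s, x < b := by
  refine not_isCofinal_iff.mp fun h => (Order.cof_le h).not_gt ?_
  rwa [Ordinal.cof_toType, hκ.cof_ord]

theorem exists_uniform_Ioc_of_isCofinal (hκ : κ.IsRegular)
    {T : κ.ord.ToType → Set κ.ord.ToType} (hT : ∀ c, IsCofinal (T c)) :
    ∃ ν : κ.ord.ToType → κ.ord.ToType, ∀ b, ∀ c ≤ b, ∃ x ∈ T c, b < x ∧ x ≤ ν b := by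
  have := Cardinal.noMaxOrder hκ.aleph0_le
  choose nxt hnxt_mem hnxt_gt using fun c => (hT c).exists_gt
  have hsmall : ∀ b, #(range fun c : Iic b => nxt c b) < κ := by
    intro b
    obtain ⟨b', hb'⟩ := exists_gt b
    calc #(range fun c : Iic b => nxt c b) ≤ #(Iic b) := mk_range_le
      _ ≤ #(Iio b') := mk_le_mk_of_subset (Iic_subset_Iio.mpr hb')
      _ < κ := by simpa using mk_Iio_lt b'
  choose ν hν using fun b => hκ.exists_forall_lt_of_mk_lt (hsmall b)
  exact ⟨ν, fun b c hc => ⟨nxt c b, hnxt_mem c b, hnxt_gt c b, (hν b _ ⟨⟨c, hc⟩, rfl⟩).le⟩⟩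

theorem exists_seq_separated (hκ : κ.IsRegular) (g : κ.ord.ToType → κ.ord.ToType) :
    ∃ σ : κ.ord.ToType → κ.ord.ToType, ∀ γ, γ < σ γ ∧ ∀ β < γ, g (σ β) < σ γ := by
  have := Cardinal.noMaxOrder hκ.aleph0_le
  have hstep : ∀ γ (f : ∀ β < γ, κ.ord.ToType), ∃ b, γ < b ∧ ∀ β (h : β < γ), g (f β h) < b := by
    intro γ f
    obtain ⟨b₁, hb₁⟩ := hκ.exists_forall_lt_of_mk_lt
      (mk_range_le.trans_lt (by simpa using mk_Iio_lt γ) :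
        #(range fun β : Iio γ => g (f β β.2)) < κ)
    obtain ⟨b₂, hb₂⟩ := exists_gt γ
    exact ⟨max b₁ b₂, lt_max_of_lt_right hb₂,
      fun β h => lt_max_of_lt_left (hb₁ _ ⟨⟨β, h⟩, rfl⟩)⟩
  choose F hF using hstep
  exact ⟨wellFounded_lt.fix F, fun γ => by rw [WellFounded.fix_eq]; exact hF γ _⟩

/-- The blocks `(σ γ, ν (σ γ)]` form `X`; each is followed by the gap `(ν (σ γ), ν (ν (σ γ))]`,
and by the choice of `ν` every `T c` with `c ≤ σ γ` meets both. -/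
theorem exists_split_of_isCofinal (hκ : κ.IsRegular) {T : κ.ord.ToType → Set κ.ord.ToType}
    (hT : ∀ c, IsCofinal (T c)) : ∃ X, ∀ c, IsCofinal (T c ∩ X) ∧ IsCofinal (T c \ X) := by
  obtain ⟨ν, hν⟩ := hκ.exists_uniform_Ioc_of_isCofinal hT
  have hν_gt : ∀ b, b < ν b := fun b =>
    let ⟨_, _, h₁, h₂⟩ := hν b b le_rfl
    h₁.trans_le h₂
  obtain ⟨σ, hσ⟩ := hκ.exists_seq_separated (ν ∘ ν)
  have hstart : ∀ b c, b < σ (max b c) ∧ c ≤ σ (max b c) := fun b c =>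
    ⟨(le_max_left b c).trans_lt (hσ _).1, ((le_max_right b c).trans_lt (hσ _).1).le⟩
  refine ⟨⋃ γ, Ioc (σ γ) (ν (σ γ)), fun c => ⟨fun b => ?_, fun b => ?_⟩⟩
  · obtain ⟨hb, hc⟩ := hstart b c
    obtain ⟨p, hpT, hp₁, hp₂⟩ := hν _ c hc
    exact ⟨p, ⟨hpT, mem_iUnion.2 ⟨_, hp₁, hp₂⟩⟩, (hb.trans hp₁).le⟩
  · obtain ⟨hb, hc⟩ := hstart b c
    obtain ⟨q, hqT, hq₁, hq₂⟩ := hν _ c (hc.trans (hν_gt _).le)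
    exact ⟨q, ⟨hqT, notMem_iUnion_Ioc_of_mem_gap hν_gt (fun β γ h => (hσ γ).2 β h) hq₁ hq₂⟩,
      (hb.trans ((hν_gt _).trans hq₁)).le⟩

theorem exists_isCofinal_inter_and_diff (hκ : κ.IsRegular) {ι : Type u} (hι : #ι ≤ κ)
    {T : ι → Set κ.ord.ToType} (hT : ∀ i, IsCofinal (T i)) :
    ∃ X, ∀ i, IsCofinal (T i ∩ X) ∧ IsCofinal (T i \ X) := by
  cases isEmpty_or_nonempty ι
  · exact ⟨∅, isEmptyElim⟩
  obtain ⟨e, he⟩ : ∃ e : κ.ord.ToType → ι, e.Surjective :=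
    Function.exists_surjective_iff.2
      ⟨inferInstance, le_def _ _ |>.mp (hι.trans_eq (mk_ord_toType κ).symm)⟩
  obtain ⟨X, hX⟩ := hκ.exists_split_of_isCofinal fun c => hT (e c)
  exact ⟨X, fun i => by obtain ⟨c, rfl⟩ := he i; exact hX c⟩

end Cardinal.IsRegular

theorem notMem_or_notMem_of_subset_union {α : Type*} {I : Set (Set α)}
    (hdown : ∀ X Y : Set α, X ⊆ Y → Y ∈ I → X ∈ I) (hunion : ∀ X ∈ I, ∀ Y ∈ I, X ∪ Y ∈ I)
    {Y Y₁ Y₂ : Set α} (hY : Y ∉ I) (h : Y ⊆ Y₁ ∪ Y₂) : Y₁ ∉ I ∨ Y₂ ∉ I := by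
  by_contra! h'
  exact hY (hdown _ _ h (hunion _ h'.1 _ h'.2))

theorem exists_mem_bdd_diff_not_isCofinal {α : Type*} [LinearOrder α] {I D : Set (Set α)}
    (hdense : ∀ Y : Set α, Y ∉ I → ∃ B ∈ D, Bdd (B \ Y)) {A Y : Set α} (hAY : A ∩ Y ∉ I) :
    ∃ B ∈ D, Bdd (B \ A) ∧ ¬IsCofinal ((B ∩ A) \ Y) := by
  obtain ⟨B, hBD, hB⟩ := hdense _ hAY
  refine ⟨B, hBD, hB.mono (sdiff_subset_sdiff_right inter_subset_left),
    bdd_iff_not_isCofinal.mp (hB.mono ?_)⟩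
  rintro x ⟨⟨hxB, hxA⟩, hxY⟩
  exact ⟨hxB, fun h => hxY h.2⟩

theorem statement5 (κ : Cardinal.{0}) (hκreg : κ.IsRegular)
    (I : Set (Set κ.ord.ToType))
    (hdown : ∀ X Y : Set κ.ord.ToType, X ⊆ Y → Y ∈ I → X ∈ I)
    (hunion : ∀ X ∈ I, ∀ Y ∈ I, X ∪ Y ∈ I)
    (hproper : (Set.univ : Set κ.ord.ToType) ∉ I)
    (hbdd : ∀ X : Set κ.ord.ToType, Bdd X → X ∈ I)
    (D : Set (Set κ.ord.ToType))
    (hDpos : ∀ X ∈ D, X ∉ I)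
    (hdense : ∀ Y : Set κ.ord.ToType, Y ∉ I → ∃ B ∈ D, Bdd (B \ Y)) :
    (∀ A : Set κ.ord.ToType, A ∉ I →
      Order.succ κ ≤ #{B : Set κ.ord.ToType | B ∈ D ∧ Bdd (B \ A)}) ∧
    Order.succ κ ≤ #D := by
  have hcof : ∀ X, X ∉ I → IsCofinal X := fun X hX =>
    by_contra fun h => hX (hbdd X (bdd_iff_not_isCofinal.mpr h))
  have key : ∀ A, A ∉ I → κ < #{B : Set κ.ord.ToType | B ∈ D ∧ Bdd (B \ A)} := by
    intro A hA
    by_contra! hle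
    obtain ⟨X, hX⟩ := hκreg.exists_isCofinal_inter_and_diff hle
      (T := fun B => (B : Set κ.ord.ToType) ∩ A) fun B => hcof _ <|
        (notMem_or_notMem_of_subset_union hdown hunion (hDpos _ B.2.1)
          (inter_union_sdiff B.1 A).ge).resolve_right (not_not.mpr (hbdd _ B.2.2))
    rcases notMem_or_notMem_of_subset_union hdown hunion hA (inter_union_sdiff A X).ge
      with hAX | hAX
    · obtain ⟨B, hBD, hBA, hB⟩ := exists_mem_bdd_diff_not_isCofinal hdense hAX
      exact hB (hX ⟨B, hBD, hBA⟩).2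
    · rw [Set.sdiff_eq] at hAX
      obtain ⟨B, hBD, hBA, hB⟩ := exists_mem_bdd_diff_not_isCofinal hdense hAX
      exact hB (by simpa only [sdiff_compl] using (hX ⟨B, hBD, hBA⟩).1)
  exact ⟨fun A hA => Order.succ_le_of_lt (key A hA),
    (Order.succ_le_of_lt (key _ hproper)).trans (mk_le_mk_of_subset fun _ hB => hB.1)⟩
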